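/- Let A be an invertible n×n real matrix and 1 ≤ l < n. Then the Hilbert–Schmidt (Frobenius) norm of B satisfies ‖B‖_{HS}² = Σ_{k=l+1}^n dist(X_k, H_{l,k})^{−2}, where dist denotes Euclidean distance in ℝ^n. -/

import Mathlib

open Matrix

noncomputable section

/-- `k`-th column of a matrix, as a vector of `EuclideanSpace ℝ (Fin n)`. -/
def col {n m : ℕ} (A : Matrix (Fin n) (Fin m) ℝ) (k : Fin m) : EuclideanSpace ℝ (Fin n) :=
  WithLp.toLp 2 (fun i => A i k)

/-- A plain vector viewed in `EuclideanSpace ℝ (Fin n)`. -/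
def toE {n : ℕ} (x : Fin n → ℝ) : EuclideanSpace ℝ (Fin n) := WithLp.toLp 2 x

/-- The `n × l` matrix of the first `l` columns of `A` (junk `0` columns if `l > n`). -/
def firstCols {n : ℕ} (A : Matrix (Fin n) (Fin n) ℝ) (l : ℕ) : Matrix (Fin n) (Fin l) ℝ :=
  fun i j => if h : (j : ℕ) < n then A i ⟨j, h⟩ else 0

/-- The `n × (n-l)` matrix of the last `n - l` columns of `A`. -/
def lastCols {n : ℕ} (A : Matrix (Fin n) (Fin n) ℝ) (l : ℕ) : Matrix (Fin n) (Fin (n - l)) ℝ :=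
  fun i j => A i ⟨l + j, by have := j.isLt; omega⟩

/-- `H_l`: the span of the last `n - l` columns of `A`, i.e. the columns `X_k` with
(0-based) index `k ≥ l` (paper's 1-based indices `k > l`). -/
def Hspan {n : ℕ} (A : Matrix (Fin n) (Fin n) ℝ) (l : ℕ) :
    Submodule ℝ (EuclideanSpace ℝ (Fin n)) :=
  Submodule.span ℝ (col A '' {k | l ≤ (k : ℕ)})

/-- `H_{l,k}`: the span of the columns `X_j` with (0-based) index `j ≥ l`, `j ≠ k`. -/
def Hspan' {n : ℕ} (A : Matrix (Fin n) (Fin n) ℝ) (l : ℕ) (k : Fin n) :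
    Submodule ℝ (EuclideanSpace ℝ (Fin n)) :=
  Submodule.span ℝ (col A '' {j | l ≤ (j : ℕ) ∧ j ≠ k})

/-- `Y_k* = P_l X_k*`, where `X_k*` is the `k`-th column of `(A⁻¹)ᵀ` and `P_l` is the
orthogonal projection onto `H_l`. -/
def Ystar {n : ℕ} (A : Matrix (Fin n) (Fin n) ℝ) (l : ℕ) (k : Fin n) :
    EuclideanSpace ℝ (Fin n) :=
  ↑(Submodule.orthogonalProjectionOnto (Hspan A l) (_root_.col A⁻¹ᵀ k))

/-- The `(n-l) × n` matrix `B` whose rows are `(Y_k*)ᵀ` for `k` ranging over the last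
`n - l` indices. -/
def Bmat {n : ℕ} (A : Matrix (Fin n) (Fin n) ℝ) (l : ℕ) : Matrix (Fin (n - l)) (Fin n) ℝ :=
  fun r i => Ystar A l ⟨l + r, by have := r.isLt; omega⟩ i

/-- Squared Hilbert–Schmidt (Frobenius) norm of a matrix. -/
def hsNormSq {n m : ℕ} (B : Matrix (Fin m) (Fin n) ℝ) : ℝ :=
  ∑ r, ∑ i, (B r i) ^ 2

/-- Hilbert–Schmidt (Frobenius) norm of a matrix. -/
def hsNorm {n m : ℕ} (B : Matrix (Fin m) (Fin n) ℝ) : ℝ :=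
  Real.sqrt (hsNormSq B)

/-- Operator (`ℓ² → ℓ²`) norm of a matrix, as the supremum of `‖Bx‖₂` over the unit
sphere. -/
def opNorm {n m : ℕ} (B : Matrix (Fin m) (Fin n) ℝ) : ℝ :=
  sSup ((fun x : EuclideanSpace ℝ (Fin n) => ‖toE (B *ᵥ fun i => x i)‖) '' {x | ‖x‖ = 1})

/-!
`Y_k*` lies in `H_l`, pairs to `δ_{kj}` with the columns `X_j` spanning `H_l`, and so is
orthogonal to `H_{l,k}`. Since `H_l = H_{l,k} ⊕ ℝ X_k`, this forces `Y_k*` to be the multiple of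
the residual `w = X_k - P_{H_{l,k}} X_k` with `⟪Y_k*, X_k⟫ = 1`, i.e. `Y_k* = w / ‖w‖²`; hence
`‖Y_k*‖ = 1 / dist(X_k, H_{l,k})`, and summing the squares of these row norms gives `‖B‖_{HS}²`.
-/

open Metric
open scoped InnerProductSpace

theorem Submodule.infDist_eq_norm_sub_starProjection {𝕜 E : Type*} [RCLike 𝕜]
    [NormedAddCommGroup E] [InnerProductSpace 𝕜 E] (K : Submodule 𝕜 E)
    [K.HasOrthogonalProjection] (x : E) :
    infDist x K = ‖x - K.starProjection x‖ := by
  simp_rw [infDist_eq_iInf, starProjection_minimal, dist_eq_norm]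
  rfl

theorem Submodule.norm_eq_inv_infDist_of_mem_sup_span_singleton {E : Type*}
    [NormedAddCommGroup E] [InnerProductSpace ℝ E] (K : Submodule ℝ E)
    [K.HasOrthogonalProjection] {x y : E} (hy : y ∈ K ⊔ ℝ ∙ x) (hyK : y ∈ Kᗮ)
    (hyx : ⟪y, x⟫_ℝ = 1) : ‖y‖ = (infDist x K)⁻¹ := by
  rw [infDist_eq_norm_sub_starProjection]
  set w := x - K.starProjection x
  have hw : w ∈ Kᗮ := K.sub_starProjection_mem_orthogonal x
  obtain ⟨k, hk, _, hax, rfl⟩ := Submodule.mem_sup.1 hy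
  obtain ⟨a, rfl⟩ := Submodule.mem_span_singleton.1 hax
  have hy_eq : k + a • x = a • w := by
    rw [← Kᗮ.starProjection_eq_self_iff.2 hyK, map_add, map_smul,
      starProjection_orthogonal_apply_eq_zero hk, starProjection_orthogonal_val, zero_add]
  have hwx : ⟪w, x⟫_ℝ = ‖w‖ ^ 2 := by
    rw [← real_inner_self_eq_norm_sq, inner_sub_right (x := w) (y := x),
      inner_left_of_mem_orthogonal (K.starProjection_apply_mem x) hw, sub_zero]
  rw [hy_eq, real_inner_smul_left, hwx] at hyx
  have ha : a = (‖w‖ ^ 2)⁻¹ := eq_inv_of_mul_eq_one_left hyx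
  have hw0 : ‖w‖ ≠ 0 := by rintro h; simp [h] at hyx
  rw [hy_eq, norm_smul, ha, Real.norm_of_nonneg (by positivity)]
  field_simp

theorem Finset.sum_filter_le_eq_sum_fin_sub {M : Type*} [AddCommMonoid M] {n : ℕ} (l : ℕ)
    (f : Fin n → M) :
    ∑ k ∈ univ.filter (fun k : Fin n => l ≤ (k : ℕ)), f k =
      ∑ r : Fin (n - l), f ⟨l + r, by omega⟩ := by
  refine (sum_bij' (fun (r : Fin (n - l)) _ => (⟨l + r, by omega⟩ : Fin n))
    (fun k hk => (⟨k - l, by simp only [mem_filter] at hk; omega⟩ : Fin (n - l)))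
    ?_ ?_ ?_ ?_ ?_).symm
  all_goals intro i hi
  all_goals simp only [mem_filter, mem_univ, true_and, Fin.ext_iff] at hi ⊢
  all_goals omega

theorem hsNormSq_eq_sum_norm_sq {m n : ℕ} (B : Matrix (Fin m) (Fin n) ℝ) :
    hsNormSq B = ∑ r, ‖toE (B r)‖ ^ 2 := by
  simp only [hsNormSq, toE, EuclideanSpace.real_norm_sq_eq]

theorem inner_col_col {m n p : ℕ} (B : Matrix (Fin m) (Fin n) ℝ) (C : Matrix (Fin m) (Fin p) ℝ)
    (j : Fin n) (k : Fin p) : ⟪_root_.col B j, _root_.col C k⟫_ℝ = (Bᵀ * C) j k := by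
  simp only [_root_.col, PiLp.inner_apply, RCLike.inner_apply, conj_trivial, mul_apply,
    transpose_apply, mul_comm]

section Columns

variable {n : ℕ} (A : Matrix (Fin n) (Fin n) ℝ) (l : ℕ)

theorem inner_col_inv_transpose_col (hA : IsUnit A) (j k : Fin n) :
    ⟪_root_.col A⁻¹ᵀ j, _root_.col A k⟫_ℝ = if j = k then 1 else 0 := by
  rw [inner_col_col, transpose_transpose, nonsing_inv_mul A ((isUnit_iff_isUnit_det A).1 hA),
    one_apply]

theorem inner_Ystar_col (hA : IsUnit A) (k : Fin n) {j : Fin n} (hj : l ≤ (j : ℕ)) :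
    ⟪Ystar A l k, _root_.col A j⟫_ℝ = if k = j then 1 else 0 := by
  have hXj : _root_.col A j ∈ Hspan A l := Submodule.subset_span ⟨j, hj, rfl⟩
  rw [Ystar, ← Submodule.starProjection_apply, Submodule.inner_starProjection_left_eq_right,
    Submodule.starProjection_eq_self_iff.2 hXj, inner_col_inv_transpose_col A hA]

theorem Ystar_mem_orthogonal_Hspan' (hA : IsUnit A) (k : Fin n) :
    Ystar A l k ∈ (Hspan' A l k)ᗮ := by
  refine Submodule.isOrtho_iff_le.1 (Submodule.isOrtho_span.2 ?_)
    (Submodule.mem_span_singleton_self _)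
  rintro _ rfl _ ⟨j, ⟨hj, hjk⟩, rfl⟩
  rw [inner_Ystar_col A l hA k hj, if_neg hjk.symm]

theorem Hspan_eq_Hspan'_sup {k : Fin n} (hk : l ≤ (k : ℕ)) :
    Hspan A l = Hspan' A l k ⊔ ℝ ∙ _root_.col A k := by
  have : {j : Fin n | l ≤ (j : ℕ)} = insert k {j : Fin n | l ≤ (j : ℕ) ∧ j ≠ k} := by
    ext j
    by_cases hjk : j = k <;> simp [hjk, hk]
  rw [Hspan, Hspan', this, Set.image_insert_eq, Submodule.span_insert, sup_comm]

theorem norm_Ystar_eq_inv_infDist (hA : IsUnit A) {k : Fin n} (hk : l ≤ (k : ℕ)) :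
    ‖Ystar A l k‖ = (infDist (_root_.col A k) (Hspan' A l k))⁻¹ := by
  refine Submodule.norm_eq_inv_infDist_of_mem_sup_span_singleton _ ?_
    (Ystar_mem_orthogonal_Hspan' A l hA k) (by rw [inner_Ystar_col A l hA k hk, if_pos rfl])
  rw [← Hspan_eq_Hspan'_sup A l hk]
  exact Submodule.coe_mem _

theorem hsNormSq_Bmat_eq_sum_norm_Ystar_sq :
    hsNormSq (Bmat A l) = ∑ k ∈ Finset.univ.filter (fun k : Fin n => l ≤ (k : ℕ)),
      ‖Ystar A l k‖ ^ 2 := by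
  rw [hsNormSq_eq_sum_norm_sq, Finset.sum_filter_le_eq_sum_fin_sub]
  rfl

end Columns

theorem hsNormSq_Bmat_eq_sum_inv_dist_sq_general (n l : ℕ)
    (A : Matrix (Fin n) (Fin n) ℝ) (hA : IsUnit A) :
    hsNormSq (Bmat A l) =
      ∑ k ∈ Finset.univ.filter (fun k : Fin n => l ≤ (k : ℕ)),
        ((Metric.infDist (_root_.col A k) (Hspan' A l k : Set (EuclideanSpace ℝ (Fin n)))) ^ 2)⁻¹ := by
  rw [hsNormSq_Bmat_eq_sum_norm_Ystar_sq]
  refine Finset.sum_congr rfl fun k hk => ?_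
  rw [norm_Ystar_eq_inv_infDist A l hA (Finset.mem_filter.1 hk).2, inv_pow]

/-- **Step 1.2.1 identity.** For an invertible `n × n` matrix `A` and `1 ≤ l < n`, the
squared Hilbert–Schmidt norm of `B` equals `Σ_{k>l} dist(X_k, H_{l,k})⁻²`. -/
theorem hsNormSq_Bmat_eq_sum_inv_dist_sq (n l : ℕ) (hl : 1 ≤ l) (hln : l < n)
    (A : Matrix (Fin n) (Fin n) ℝ) (hA : IsUnit A) :
    hsNormSq (Bmat A l) =
      ∑ k ∈ Finset.univ.filter (fun k : Fin n => l ≤ (k : ℕ)),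
        ((Metric.infDist (_root_.col A k) (Hspan' A l k : Set (EuclideanSpace ℝ (Fin n)))) ^ 2)⁻¹ :=
  hsNormSq_Bmat_eq_sum_inv_dist_sq_general n l A hA

end
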